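/- Suppose F is algebraically closed and E, E' are finite subgroups of (F, +), both of rank 2. If d_{1,2}(E)^{p+1} · d_{2,2}(E')^{p} = d_{1,2}(E')^{p+1} · d_{2,2}(E)^{p}, then E' = α•E for some α ∈ F^×. -/

import Mathlib

open Polynomial Pointwise

/-- `dCoef p r i E` is the Dickson-type coefficient `d_{i,r}(E)`: the coefficient of
`X ^ (p ^ (r - i))` in `∏_{c ∈ E} (X - c)`. -/
noncomputable def dCoef {F : Type*} [Field F] (p r i : ℕ)
    (E : AddSubgroup F) [Fintype E] : F :=
  (∏ c : E, (X - C (c : F))).coeff (p ^ (r - i))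

/-!
The subspace polynomial `F_E = ∏_{c ∈ E} (X - c)` vanishes exactly on `E` and is additive.
Over an infinite perfect field of characteristic `p` an additive polynomial has constant
derivative `a`, so it is `g (X ^ p) + a X` with `g` again additive; hence only the monomials
`X ^ p ^ i` occur, and for rank two `F_E x = x ^ p ^ 2 + b x ^ p + a x` with `a ≠ 0` by
separability. The hypothesis is what is needed for some `β` to satisfy `β ^ (p + 1) a = a'` and
`β ^ p b = b'`; if `α ^ (p - 1) = β` then `F_E' (α x) = α ^ p ^ 2 F_E x`, so `E' = α • E`.
-/

namespace Polynomial

variable {R : Type*} [CommRing R]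

def IsAdditive (f : R[X]) : Prop :=
  ∀ x y : R, f.eval (x + y) = f.eval x + f.eval y

namespace IsAdditive

variable {f : R[X]}

theorem coeff_zero (hf : f.IsAdditive) : f.coeff 0 = 0 := by
  have h := hf 0 0
  rw [add_zero] at h
  rw [coeff_zero_eq_eval_zero]
  linear_combination -h

variable [IsDomain R] [Infinite R]

theorem comp_X_add_C (hf : f.IsAdditive) (x : R) : f.comp (X + C x) = f + C (f.eval x) :=
  funext fun y => by simp [eval_comp, hf y x]

theorem derivative_eq_C (hf : f.IsAdditive) : derivative f = C (f.coeff 1) := by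
  have hconst (x : R) : (derivative f).eval x = (derivative f).eval 0 := by
    simpa [derivative_comp, eval_comp] using
      congrArg (fun g => (derivative g).eval 0) (hf.comp_X_add_C x)
  have hzero : (derivative f).eval 0 = f.coeff 1 := by
    simp [← coeff_zero_eq_eval_zero, coeff_derivative]
  exact funext fun x => by rw [hconst, hzero, eval_C]

variable (p : ℕ) [Fact p.Prime] [CharP R p] [PerfectRing R p]

theorem exists_eq_expand_add (hf : f.IsAdditive) :
    ∃ g : R[X], g.IsAdditive ∧ f = expand R p g + C (f.coeff 1) * X := by
  have hder : derivative (f - C (f.coeff 1) * X) = 0 := by simp [hf.derivative_eq_C]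
  set g := contract p (f - C (f.coeff 1) * X)
  have hfg : expand R p g = f - C (f.coeff 1) * X :=
    expand_contract p hder (Fact.out : p.Prime).ne_zero
  have heval (x : R) : g.eval (x ^ p) = f.eval x - f.coeff 1 * x := by
    rw [← expand_eval, hfg]; simp
  refine ⟨g, fun u v => ?_, by rw [hfg]; ring⟩
  obtain ⟨x, rfl⟩ := surjective_frobenius R p u
  obtain ⟨y, rfl⟩ := surjective_frobenius R p v
  simp only [frobenius_def, ← add_pow_char, heval, hf x y]
  ring

theorem exists_pow_eq_of_coeff_ne_zero (hf : f.IsAdditive) {n : ℕ} (hn : f.coeff n ≠ 0) :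
    ∃ i, p ^ i = n := by
  induction n using Nat.strong_induction_on generalizing f with
  | _ n ih =>
  have hp := (Fact.out : p.Prime)
  obtain ⟨g, hg, hfg⟩ := hf.exists_eq_expand_add p
  rcases eq_or_ne n 1 with rfl | hn1
  · exact ⟨0, pow_zero p⟩
  rcases eq_or_ne n 0 with rfl | hn0
  · exact absurd hf.coeff_zero hn
  rw [hfg, coeff_add, coeff_expand hp.pos, coeff_C_mul_X, if_neg hn1, add_zero] at hn
  split_ifs at hn with hdvd
  · obtain ⟨i, hi⟩ := ih (n / p) (Nat.div_lt_self (Nat.pos_of_ne_zero hn0) hp.one_lt) hg hn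
    exact ⟨i + 1, by rw [pow_succ, hi, Nat.div_mul_cancel hdvd]⟩
  · exact absurd rfl hn

theorem eq_sum_range (hf : f.IsAdditive) {r : ℕ} (hdeg : f.natDegree ≤ p ^ r) :
    f = ∑ i ∈ Finset.range (r + 1), C (f.coeff (p ^ i)) * X ^ (p ^ i) := by
  have hinj := Nat.pow_right_injective (Fact.out : p.Prime).two_le
  ext n
  simp only [finsetSum_coeff, coeff_C_mul_X_pow]
  by_cases h : ∃ i ∈ Finset.range (r + 1), p ^ i = n
  · obtain ⟨i, hi, rfl⟩ := h
    rw [Finset.sum_eq_single i (fun j _ hji => if_neg fun h => hji (hinj h).symm)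
      (fun hi' => absurd hi hi'), if_pos rfl]
  · rw [Finset.sum_eq_zero fun i hi => if_neg fun hn => h ⟨i, hi, hn.symm⟩]
    by_contra hn
    obtain ⟨i, rfl⟩ := hf.exists_pow_eq_of_coeff_ne_zero p hn
    have hir : p ^ i ≤ p ^ r := (le_natDegree_of_ne_zero hn).trans hdeg
    rw [Nat.pow_le_pow_iff_right (Fact.out : p.Prime).one_lt] at hir
    exact h ⟨i, Finset.mem_range.2 (Nat.lt_succ_of_le hir), rfl⟩

end IsAdditive

end Polynomial

namespace AddSubgroup

variable {F : Type*} [Field F] (E : AddSubgroup F) [Fintype E]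

noncomputable def subspacePoly : F[X] :=
  ∏ c : E, (X - C (c : F))

theorem dCoef_eq_coeff_subspacePoly (p r i : ℕ) :
    dCoef p r i E = E.subspacePoly.coeff (p ^ (r - i)) :=
  rfl

theorem eval_subspacePoly (x : F) : E.subspacePoly.eval x = ∏ c : E, (x - c) := by
  simp [subspacePoly, eval_prod]

theorem eval_subspacePoly_eq_zero_iff {x : F} : E.subspacePoly.eval x = 0 ↔ x ∈ E := by
  simp [eval_subspacePoly, Finset.prod_eq_zero_iff, sub_eq_zero]

theorem isMonicOfDegree_subspacePoly : IsMonicOfDegree E.subspacePoly (Fintype.card E) :=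
  ⟨by simp [subspacePoly], monic_prod_of_monic _ _ fun c _ => monic_X_sub_C _⟩

theorem eval_subspacePoly_add_mem (x : F) {y : F} (hy : y ∈ E) :
    E.subspacePoly.eval (x + y) = E.subspacePoly.eval x := by
  rw [eval_subspacePoly, eval_subspacePoly, ← Equiv.prod_comp (Equiv.addRight ⟨y, hy⟩)]
  refine Finset.prod_congr rfl fun c _ => ?_
  simp only [Equiv.coe_addRight, coe_add]
  ring

theorem isAdditive_subspacePoly : E.subspacePoly.IsAdditive := by
  intro x y
  set f := E.subspacePoly
  have hmon := E.isMonicOfDegree_subspacePoly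
  -- `g` vanishes on the `|E|` points of `E`, and its leading terms cancel
  set g := f.comp (X + C x) - f - C (f.eval x)
  have hdeg : g.natDegree < Fintype.card E := by
    rw [natDegree_sub_C]
    refine IsMonicOfDegree.natDegree_sub_lt Fintype.card_ne_zero ?_ hmon
    simpa using hmon.comp one_ne_zero (isMonicOfDegree_X_add_one x)
  have hg : g = 0 := by
    refine eq_zero_of_natDegree_lt_card_of_eval_eq_zero g Subtype.val_injective (fun c => ?_) hdeg
    have hc := (E.eval_subspacePoly_eq_zero_iff).2 c.2
    simp [g, f, eval_comp, add_comm _ x, E.eval_subspacePoly_add_mem x c.2, hc]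
  have := congrArg (eval y) hg
  simp only [g, eval_sub, eval_comp, eval_add, eval_X, eval_C, eval_zero] at this
  rw [add_comm x y]
  linear_combination this

theorem dCoef_self_ne_zero (p r : ℕ) : dCoef p r r E ≠ 0 := by
  have hsep : E.subspacePoly.Separable := separable_prod_X_sub_C_iff.mpr Subtype.val_injective
  have := hsep.eval₂_derivative_ne_zero (RingHom.id F)
    (E.eval_subspacePoly_eq_zero_iff.2 E.zero_mem)
  simpa [dCoef_eq_coeff_subspacePoly, ← coeff_zero_eq_eval_zero, coeff_derivative] using this

theorem eval_subspacePoly_of_card_eq_sq [Infinite F] {p : ℕ} [Fact p.Prime] [CharP F p]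
    [PerfectRing F p] (hE : Fintype.card E = p ^ 2) (x : F) :
    E.subspacePoly.eval x = x ^ p ^ 2 + dCoef p 2 1 E * x ^ p + dCoef p 2 2 E * x := by
  have hmon := E.isMonicOfDegree_subspacePoly
  rw [hE] at hmon
  rw [E.isAdditive_subspacePoly.eq_sum_range p hmon.natDegree_eq.le]
  simp only [Finset.sum_range_succ, Finset.range_one, Finset.sum_singleton, pow_zero, pow_one,
    ← hmon.natDegree_eq, hmon.monic.coeff_natDegree, map_one, one_mul, eval_add, eval_mul, eval_C,
    eval_X, eval_pow, dCoef_eq_coeff_subspacePoly, Nat.add_one_sub_one, tsub_self]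
  ring

theorem coe_eq_smul_of_eval_subspacePoly_mul (E' : AddSubgroup F) [Fintype E'] {α c : F}
    (hα : α ≠ 0) (hc : c ≠ 0)
    (h : ∀ x, E'.subspacePoly.eval (α * x) = c * E.subspacePoly.eval x) :
    (E' : Set F) = α • (E : Set F) := by
  ext y
  have hy := h (α⁻¹ * y)
  rw [mul_inv_cancel_left₀ hα] at hy
  rw [Set.mem_smul_set_iff_inv_smul_mem₀ hα, SetLike.mem_coe, SetLike.mem_coe,
    ← eval_subspacePoly_eq_zero_iff, ← eval_subspacePoly_eq_zero_iff, hy, smul_eq_mul,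
    mul_eq_zero, or_iff_right hc]

end AddSubgroup

theorem exists_pow_succ_mul_eq_and_pow_mul_eq {F : Type*} [Field F] [IsAlgClosed F] {n : ℕ}
    {a a' b b' : F} (ha : a ≠ 0) (ha' : a' ≠ 0)
    (h : b ^ (n + 1) * a' ^ n = b' ^ (n + 1) * a ^ n) :
    ∃ β : F, β ^ (n + 1) * a = a' ∧ β ^ n * b = b' := by
  rcases eq_or_ne b 0 with rfl | hb
  · obtain ⟨β, hβ⟩ := IsAlgClosed.exists_pow_nat_eq (a' / a) n.succ_pos
    refine ⟨β, by rw [hβ, div_mul_cancel₀ _ ha], ?_⟩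
    obtain rfl : b' = 0 := by simpa [ha] using h.symm
    rw [mul_zero]
  · have hb' : b' ≠ 0 := by
      rintro rfl
      simp [hb, ha'] at h
    -- dividing the two required equations forces this `β`
    refine ⟨a' * b / (a * b'), ?_, ?_⟩
    all_goals rw [div_pow, div_mul_eq_mul_div, div_eq_iff (pow_ne_zero _ (mul_ne_zero ha hb'))]
    · linear_combination (a' * a) * h
    · linear_combination h

/-- Over an algebraically closed `F`, two finite subgroups of rank `2`
with `d_{1,2}(E)^{p+1} d_{2,2}(E')^p = d_{1,2}(E')^{p+1} d_{2,2}(E)^p` are dilations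
of one another. -/
theorem statement7 {F : Type*} [Field F] [IsAlgClosed F] {p : ℕ} [Fact p.Prime]
    [CharP F p] (E E' : AddSubgroup F) [Fintype E] [Fintype E']
    (hE : Fintype.card E = p ^ 2) (hE' : Fintype.card E' = p ^ 2)
    (h : dCoef p 2 1 E ^ (p + 1) * dCoef p 2 2 E' ^ p =
      dCoef p 2 1 E' ^ (p + 1) * dCoef p 2 2 E ^ p) :
    ∃ α : F, α ≠ 0 ∧ (E' : Set F) = α • (E : Set F) := by
  have hp : p.Prime := Fact.out
  have hp1 : 0 < p - 1 := Nat.sub_pos_of_lt hp.one_lt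
  obtain ⟨β, hβa, hβb⟩ :=
    exists_pow_succ_mul_eq_and_pow_mul_eq (E.dCoef_self_ne_zero p 2) (E'.dCoef_self_ne_zero p 2) h
  obtain ⟨α, rfl⟩ := IsAlgClosed.exists_pow_nat_eq β hp1
  have hα : α ≠ 0 := by
    rintro rfl
    refine E'.dCoef_self_ne_zero p 2 ?_
    rw [← hβa, zero_pow hp1.ne', zero_pow p.succ_ne_zero, zero_mul]
  refine ⟨α, hα, E.coe_eq_smul_of_eval_subspacePoly_mul E' hα (pow_ne_zero (p ^ 2) hα)
    fun x => ?_⟩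
  rw [E.eval_subspacePoly_of_card_eq_sq hE, E'.eval_subspacePoly_of_card_eq_sq hE']
  -- `α ^ p ^ 2 = α * (α ^ (p - 1)) ^ (p + 1) = α ^ p * (α ^ (p - 1)) ^ p`
  obtain ⟨q, rfl⟩ : ∃ q, p = q + 1 := ⟨p - 1, (Nat.sub_add_cancel hp.one_le).symm⟩
  simp only [Nat.add_sub_cancel] at hβa hβb
  linear_combination (-(α * x) ^ (q + 1)) * hβb - (α * x) * hβa
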